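/- The maximal ideals of A ⋈^f J are exactly the ideals m ⋈^f J := {(a, f(a)+j) : a ∈ m, j ∈ J} for m a maximal ideal of A, together with the ideals Q̄^f := {(a, f(a)+j) : a ∈ A, j ∈ J, f(a)+j ∈ Q} for Q a maximal ideal of B not containing J. -/

import Mathlib

/-!
The kernel of the projection `A ⋈^f J → A` is `0 × J`. A maximal ideal `M` containing it is the
pullback of a maximal ideal of `A`. Otherwise `M` misses some `x = (0, j)`, and `x` behaves like a
conductor element: multiplication by `x` sends `A ⋈^f J` into `0 × jB`, and `b ↦ (0, j b)` is linear
over `A ⋈^f J`. So the residue map `π : A ⋈^f J → A ⋈^f J ⧸ M` extends through `B` by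
`b ↦ π (0, j b) / π x`, and `M` is the pullback of the kernel of this extension, a maximal ideal of
`B` not containing `j`. Conversely, if `Q` is maximal with `J ⊄ Q`, then `Q + J = B` shows that every
class of `B ⧸ Q` is represented by an element of `J`, hence by an element of `A ⋈^f J`.
-/

variable {A B : Type*} [CommRing A] [CommRing B]

/-- The amalgamation `A ⋈^f J` of `A` and `B` along the ideal `J` with respect to `f`,
as a subring of `A × B`. -/
def amalg (f : A →+* B) (J : Ideal B) : Subring (A × B) where
  carrier := {p | ∃ a, ∃ j ∈ J, p = (a, f a + j)}
  zero_mem' := ⟨0, 0, J.zero_mem, by simp [Prod.ext_iff]⟩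
  one_mem' := ⟨1, 0, J.zero_mem, by simp [Prod.ext_iff]⟩
  add_mem' := by
    rintro _ _ ⟨a, j, hj, rfl⟩ ⟨a', j', hj', rfl⟩
    exact ⟨a + a', j + j', J.add_mem hj hj', by simp [Prod.ext_iff]; ring⟩
  neg_mem' := by
    rintro _ ⟨a, j, hj, rfl⟩
    exact ⟨-a, -j, J.neg_mem hj, by simp [Prod.ext_iff]; ring⟩
  mul_mem' := by
    rintro _ _ ⟨a, j, hj, rfl⟩ ⟨a', j', hj', rfl⟩
    exact ⟨a * a', f a * j' + j * f a' + j * j',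
      J.add_mem (J.add_mem (J.mul_mem_left _ hj') (J.mul_mem_right _ hj)) (J.mul_mem_right _ hj),
      by simp [Prod.ext_iff]; ring⟩

/-- The set of zero-divisors of a ring. -/
def zdSet (R : Type*) [CommRing R] : Set R := {a | ∃ b, b ≠ 0 ∧ a * b = 0}

/-- The content ideal of a polynomial: the ideal generated by its coefficients. -/
def contentIdeal {R : Type*} [CommRing R] (p : Polynomial R) : Ideal R :=
  Ideal.span (Set.range p.coeff)

/-- A polynomial is Gaussian if `c(ph) = c(p) c(h)` for every polynomial `h`. -/
def IsGaussianPoly {R : Type*} [CommRing R] (p : Polynomial R) : Prop :=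
  ∀ h : Polynomial R, contentIdeal (p * h) = contentIdeal p * contentIdeal h

/-- A Gaussian ring. -/
def IsGaussianRing (R : Type*) [CommRing R] : Prop :=
  ∀ p q : Polynomial R, contentIdeal (p * q) = contentIdeal p * contentIdeal q

/-- A Prüfer ring: every finitely generated regular ideal is invertible
(in the total ring of quotients). -/
def IsPruferRing (R : Type*) [CommRing R] : Prop :=
  ∀ I : Ideal R, I.FG → (∃ r ∈ I, r ∈ nonZeroDivisors R) →
    ∃ T : FractionalIdeal (nonZeroDivisors R) (FractionRing R),
      (I : FractionalIdeal (nonZeroDivisors R) (FractionRing R)) * T = 1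

/-- The projection `A ⋈^f J → A`. -/
def pFst (f : A →+* B) (J : Ideal B) : ↥(amalg f J) →+* A :=
  (RingHom.fst A B).comp (amalg f J).subtype

/-- The projection `A ⋈^f J → B`. -/
def pSnd (f : A →+* B) (J : Ideal B) : ↥(amalg f J) →+* B :=
  (RingHom.snd A B).comp (amalg f J).subtype

namespace Ideal

variable {R S : Type*} [CommRing R] [CommRing S]

theorem exists_isMaximal_comap_eq_of_ker_le {φ : R →+* S} (hφ : Function.Surjective φ)
    {P : Ideal R} [hP : P.IsMaximal] (hker : RingHom.ker φ ≤ P) :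
    ∃ Q : Ideal S, Q.IsMaximal ∧ P = Q.comap φ := by
  have hcomap : (P.map φ).comap φ = P := by
    rw [comap_map_of_surjective' φ hφ, sup_eq_left.mpr hker]
  refine ⟨P.map φ, (map_eq_top_or_isMaximal_of_surjective φ hφ hP).resolve_left ?_, hcomap.symm⟩
  intro htop
  exact hP.ne_top (by rw [← hcomap, htop, comap_top])

/-- `g` plays the role of multiplication by `g 1`, an element whose image lies in the conductor
of `φ`. -/
theorem exists_ringHom_comp_eq_of_conductor {K : Type*} [Field K] (φ : R →+* S) (π : R →+* K)
    (g : S →+ R) (hg_mul : ∀ s r, g (s * φ r) = g s * r) (hφg : ∀ s, φ (g s) = φ (g 1) * s)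
    (hπg : π (g 1) ≠ 0) :
    ∃ ψ : S →+* K, ψ.comp φ = π := by
  have hg_mul_g : ∀ s t, g s * g t = g (s * t) * g 1 := fun s t => by
    rw [← hg_mul, ← hg_mul, hφg]
    congr 1
    ring
  let ψ : S →+* K :=
    { toFun := fun s => π (g s) / π (g 1)
      map_one' := div_self hπg
      map_mul' := fun s t => by
        rw [div_mul_div_comm, ← map_mul π (g s), hg_mul_g, map_mul π, mul_div_mul_right _ _ hπg]
      map_zero' := by simp
      map_add' := fun s t => by simp [add_div] }
  refine ⟨ψ, RingHom.ext fun r => ?_⟩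
  change π (g (φ r)) / π (g 1) = π r
  rw [← one_mul (φ r), hg_mul, map_mul, mul_div_cancel_left₀ _ hπg]

theorem exists_isMaximal_comap_eq_of_conductor (φ : R →+* S) (g : S →+ R)
    (hg_mul : ∀ s r, g (s * φ r) = g s * r) (hφg : ∀ s, φ (g s) = φ (g 1) * s)
    {P : Ideal R} [P.IsMaximal] (hg1 : g 1 ∉ P) :
    ∃ Q : Ideal S, Q.IsMaximal ∧ φ (g 1) ∉ Q ∧ P = Q.comap φ := by
  let := Quotient.field P
  have hπg : Quotient.mk P (g 1) ≠ 0 := mt Quotient.eq_zero_iff_mem.mp hg1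
  obtain ⟨ψ, hψ⟩ := exists_ringHom_comp_eq_of_conductor φ _ g hg_mul hφg hπg
  have hψφ : ∀ r, ψ (φ r) = Quotient.mk P r := fun r => by rw [← RingHom.comp_apply, hψ]
  have hψ_surj : Function.Surjective ψ := fun y => by
    obtain ⟨r, rfl⟩ := Quotient.mk_surjective y
    exact ⟨φ r, hψφ r⟩
  refine ⟨RingHom.ker ψ, RingHom.ker_isMaximal_of_surjective ψ hψ_surj, ?_, ?_⟩
  · rwa [RingHom.mem_ker, hψφ]
  · rw [RingHom.comap_ker, hψ, mk_ker]

theorem comap_isMaximal_of_subset_range (φ : R →+* S) {Q J : Ideal S} [hQ : Q.IsMaximal]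
    (hJQ : ¬ J ≤ Q) (hJφ : (J : Set S) ⊆ Set.range φ) : (Q.comap φ).IsMaximal := by
  obtain ⟨j, hjJ, hjQ⟩ := SetLike.not_le_iff_exists.mp hJQ
  obtain ⟨c, q, hq, hcjq⟩ := hQ.exists_inv hjQ
  have hsurj : Function.Surjective ((Quotient.mk Q).comp φ) := fun y => by
    obtain ⟨s, rfl⟩ := Quotient.mk_surjective y
    obtain ⟨r, hr⟩ := hJφ (J.mul_mem_left (s * c) hjJ)
    refine ⟨r, Quotient.eq.mpr ?_⟩
    rw [hr, show s * c * j - s = -(s * q) by linear_combination s * hcjq]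
    exact Q.neg_mem (Q.mul_mem_left s hq)
  let := Quotient.field Q
  rw [← mk_ker (I := Q), RingHom.comap_ker]
  exact RingHom.ker_isMaximal_of_surjective _ hsurj

end Ideal

namespace amalg

variable (f : A →+* B) (J : Ideal B)

theorem pFst_surjective : Function.Surjective (pFst f J) :=
  fun a => ⟨⟨(a, f a), a, 0, J.zero_mem, by simp⟩, rfl⟩

theorem zero_mk_mem {j : B} (hj : j ∈ J) : ((0 : A), j) ∈ amalg f J :=
  ⟨0, j, hj, by simp⟩

theorem coe_subset_range_pSnd : (J : Set B) ⊆ Set.range (pSnd f J) :=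
  fun j hj => ⟨⟨(0, j), zero_mk_mem f J hj⟩, rfl⟩

def mulZeroMk {j : B} (hj : j ∈ J) : B →+ amalg f J where
  toFun b := ⟨(0, j * b), zero_mk_mem f J (J.mul_mem_right b hj)⟩
  map_zero' := by ext <;> simp
  map_add' b c := by ext <;> simp [mul_add]

variable {f J}

theorem snd_mem_of_mem_ker_pFst {x : amalg f J} (hx : x ∈ RingHom.ker (pFst f J)) :
    (x : A × B).2 ∈ J := by
  obtain ⟨a, j, hj, hxa⟩ := x.2
  have ha : a = 0 := by rw [← hx]; exact congrArg Prod.fst hxa.symm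
  rwa [hxa, ha, map_zero, zero_add]

theorem mulZeroMk_mul_pSnd {j : B} (hj : j ∈ J) (b : B) (r : amalg f J) :
    mulZeroMk f J hj (b * pSnd f J r) = mulZeroMk f J hj b * r := by
  ext <;> simp [mulZeroMk, pSnd, mul_assoc]

theorem pSnd_mulZeroMk {j : B} (hj : j ∈ J) (b : B) :
    pSnd f J (mulZeroMk f J hj b) = pSnd f J (mulZeroMk f J hj 1) * b := by
  simp [mulZeroMk, pSnd]

theorem mulZeroMk_one_of_mem_ker {x : amalg f J} (hx : x ∈ RingHom.ker (pFst f J)) :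
    mulZeroMk f J (snd_mem_of_mem_ker_pFst hx) 1 = x := by
  ext
  · exact hx.symm
  · simp [mulZeroMk]

end amalg

theorem amalg_maximal_ideals (f : A →+* B) (J : Ideal B)
    (M : Ideal ↥(amalg f J)) :
    M.IsMaximal ↔
      (∃ m : Ideal A, m.IsMaximal ∧ M = m.comap (pFst f J)) ∨
      (∃ Q : Ideal B, Q.IsMaximal ∧ ¬ J ≤ Q ∧ M = Q.comap (pSnd f J)) := by
  constructor
  · intro hM
    by_cases hker : RingHom.ker (pFst f J) ≤ M
    · exact Or.inl (Ideal.exists_isMaximal_comap_eq_of_ker_le (amalg.pFst_surjective f J) hker)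
    obtain ⟨x, hx, hxM⟩ := SetLike.not_le_iff_exists.mp hker
    have hxJ := amalg.snd_mem_of_mem_ker_pFst hx
    rw [← amalg.mulZeroMk_one_of_mem_ker hx] at hxM
    obtain ⟨Q, hQ, hxQ, rfl⟩ := Ideal.exists_isMaximal_comap_eq_of_conductor (pSnd f J)
      (amalg.mulZeroMk f J hxJ) (amalg.mulZeroMk_mul_pSnd hxJ) (amalg.pSnd_mulZeroMk hxJ) hxM
    exact Or.inr ⟨Q, hQ, fun hJQ => hxQ (hJQ (by simpa [amalg.mulZeroMk, pSnd] using hxJ)), rfl⟩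
  · rintro (⟨m, hm, rfl⟩ | ⟨Q, hQ, hJQ, rfl⟩)
    · exact Ideal.comap_isMaximal_of_surjective _ (amalg.pFst_surjective f J)
    · exact Ideal.comap_isMaximal_of_subset_range _ hJQ (amalg.coe_subset_range_pSnd f J)
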